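/- arXiv:2002.09390 — 2 statements merged into one kernel-verified Lean document; each statement's English description precedes it below -/
import Mathlib

section
/- For all natural numbers i ≥ 1 and n ≥ 0 the following identity holds in ℤ[q^{±1}, s^{±1}]: [n+1+i choose i]_q · ∏_{k=0}^{n}(s q^{−k−i} − s^{−1} q^{k+i}) − [n+i choose i−1]_q · ∏_{k=0}^{n}(s q^{−k−(i−1)} − s^{−1} q^{k+i−1}) = (q^{−n} s q^{−2i} − q^{n} s^{−1} q^{2i}) · [n+i choose i]_q · ∏_{k=0}^{n−1}(s q^{−k−i} − s^{−1} q^{k+i}). -/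
noncomputable section

/-- The field `ℚ(q,s)` of rational functions in two variables, which contains
the Laurent polynomial ring `ℤ[q^{±1}, s^{±1}]`. -/
abbrev QS : Type := FractionRing (MvPolynomial (Fin 2) ℚ)

/-- The variable `q`. -/
def qv : QS := algebraMap (MvPolynomial (Fin 2) ℚ) QS (MvPolynomial.X 0)

/-- The variable `s`. -/
def sv : QS := algebraMap (MvPolynomial (Fin 2) ℚ) QS (MvPolynomial.X 1)

/-- The balanced quantum integer `[x]_q = (q^x - q^{-x})/(q - q^{-1})`. -/
def qint (x : ℕ) : QS := (qv ^ x - qv⁻¹ ^ x) / (qv - qv⁻¹)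

/-- The quantum factorial `[n]_q! = [1]_q ⋯ [n]_q`. -/
def qfact (n : ℕ) : QS := ∏ k ∈ Finset.Icc 1 n, qint k

/-- The quantum binomial coefficient `[a choose b]_q = [a]_q!/([a-b]_q! [b]_q!)`. -/
def qbinom (a b : ℕ) : QS := qfact a / (qfact (a - b) * qfact b)

set_option linter.unnecessarySimpa false
set_option maxHeartbeats 1000000

lemma qv_ne : qv ≠ 0 := by
  simpa [qv, map_ne_zero_iff _ (IsFractionRing.injective (MvPolynomial (Fin 2) ℚ) QS)]
    using MvPolynomial.X_ne_zero (R := ℚ) (0 : Fin 2)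

lemma sv_ne : sv ≠ 0 := by
  simpa [sv, map_ne_zero_iff _ (IsFractionRing.injective (MvPolynomial (Fin 2) ℚ) QS)]
    using MvPolynomial.X_ne_zero (R := ℚ) (1 : Fin 2)

lemma qv_pow_ne_one (m : ℕ) (hm : 1 ≤ m) : qv ^ m ≠ 1 := by
  intro h
  have h2 : (MvPolynomial.X 0 : MvPolynomial (Fin 2) ℚ) ^ m = 1 := by
    apply IsFractionRing.injective (MvPolynomial (Fin 2) ℚ) QS
    rw [map_pow, map_one]; exact h
  have h3 := congrArg (MvPolynomial.eval (fun _ => (2:ℚ))) h2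
  simp only [map_pow, MvPolynomial.eval_X, map_one] at h3
  have : (2:ℚ)^m > 1 := one_lt_pow₀ (by norm_num) (by omega)
  rw [h3] at this; exact lt_irrefl 1 this

lemma qsub_pow_ne (a : ℕ) (ha : 1 ≤ a) : qv ^ a - qv⁻¹ ^ a ≠ 0 := by
  intro h
  have h1 : qv ^ a = qv⁻¹ ^ a := sub_eq_zero.mp h
  have : qv ^ (2*a) = 1 := by
    have h2 : qv ^ a * qv ^ a = qv ^ a * qv⁻¹ ^ a := by rw [← h1]
    rw [← pow_add, ← mul_pow, mul_inv_cancel₀ qv_ne, one_pow] at h2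
    rw [two_mul]; exact h2
  exact qv_pow_ne_one (2*a) (by omega) this

lemma qsub_ne : qv - qv⁻¹ ≠ 0 := by
  have := qsub_pow_ne 1 le_rfl; simpa using this

lemma qint_ne (a : ℕ) (ha : 1 ≤ a) : qint a ≠ 0 :=
  div_ne_zero (qsub_pow_ne a ha) qsub_ne

lemma qfact_ne (n : ℕ) : qfact n ≠ 0 := by
  rw [qfact, Finset.prod_ne_zero_iff]
  intro k hk
  exact qint_ne k (Finset.mem_Icc.mp hk).1

lemma qfact_succ (m : ℕ) : qfact (m+1) = qfact m * qint (m+1) := by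
  rw [qfact, qfact, Finset.prod_Icc_succ_top (by omega)]




lemma canc (a b : ℕ) : qv ^ (a + b) * qv⁻¹ ^ b = qv ^ a := by
  rw [pow_add, mul_assoc, ← mul_pow, mul_inv_cancel₀ qv_ne, one_pow, mul_one]

lemma canc2 (a b : ℕ) : qv ^ b * qv⁻¹ ^ (a + b) = qv⁻¹ ^ a := by
  rw [pow_add, ← mul_assoc, mul_comm (qv ^ b), mul_assoc, ← mul_pow,
    mul_inv_cancel₀ qv_ne, one_pow, mul_one]

lemma binomC'' (n j : ℕ) :
    qbinom ((n+(j+1))+1) (j+1) * qint (n+1) = qint (n+j+2) * qbinom (n+(j+1)) (j+1) := by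
  rw [qbinom, qbinom, show (n+(j+1))+1 - (j+1) = n+1 by omega,
    show (n+(j+1)) - (j+1) = n by omega, qfact_succ (n+(j+1)),
    show (n+(j+1))+1 = n+j+2 by omega, qfact_succ n]
  have h1 := qint_ne (n+1) (by omega)
  have h3 := qfact_ne n
  have h4 := qfact_ne (j+1)
  field_simp

lemma binomB'' (n j : ℕ) :
    qbinom (n+(j+1)) j * qint (n+1) = qint (j+1) * qbinom (n+(j+1)) (j+1) := by
  rw [qbinom, qbinom, show (n+(j+1)) - j = n+1 by omega,
    show (n+(j+1)) - (j+1) = n by omega, qfact_succ n, qfact_succ j]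
  have h1 := qint_ne (n+1) (by omega)
  have h2 := qint_ne (j+1) (by omega)
  have h3 := qfact_ne n
  have h4 := qfact_ne j
  field_simp

lemma key' (n j : ℕ) :
    (qv^(n+j+2) - qv⁻¹^(n+j+2)) * (sv * qv⁻¹ ^ (n + (j+1)) - sv⁻¹ * qv ^ (n + (j+1)))
      - (qv^(j+1) - qv⁻¹^(j+1)) * (sv * qv⁻¹ ^ j - sv⁻¹ * qv ^ j)
    = (qv^(n+1) - qv⁻¹^(n+1)) *
        (qv⁻¹ ^ n * sv * qv⁻¹ ^ (2*(j+1)) - qv ^ n * sv⁻¹ * qv ^ (2*(j+1))) := by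
  linear_combination sv * canc 1 (n+j+1) + sv⁻¹ * canc2 1 (n+j+1)
    - sv * canc 1 j - sv⁻¹ * canc2 1 j
    - sv * canc2 (2*j+1) (n+1) - sv⁻¹ * canc (2*j+1) (n+1)

lemma key (n j : ℕ) :
    qint (n+j+2) * (sv * qv⁻¹ ^ (n + (j+1)) - sv⁻¹ * qv ^ (n + (j+1)))
      - qint (j+1) * (sv * qv⁻¹ ^ j - sv⁻¹ * qv ^ j)
    = qint (n+1) *
        (qv⁻¹ ^ n * sv * qv⁻¹ ^ (2*(j+1)) - qv ^ n * sv⁻¹ * qv ^ (2*(j+1))) := by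
  simp only [qint, div_mul_eq_mul_div, ← sub_div]
  rw [key' n j]

theorem stmt_5 (i n : ℕ) (hi : 1 ≤ i) :
    qbinom (n + 1 + i) i *
        (∏ k ∈ Finset.range (n + 1),
          (sv * qv ^ (-(k : ℤ) - (i : ℤ)) - sv⁻¹ * qv ^ ((k : ℤ) + (i : ℤ)))) -
      qbinom (n + i) (i - 1) *
        (∏ k ∈ Finset.range (n + 1),
          (sv * qv ^ (-(k : ℤ) - ((i : ℤ) - 1)) - sv⁻¹ * qv ^ ((k : ℤ) + (i : ℤ) - 1))) =
    (qv ^ (-(n : ℤ)) * sv * qv ^ (-2 * (i : ℤ)) - qv ^ (n : ℤ) * sv⁻¹ * qv ^ (2 * (i : ℤ))) *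
      qbinom (n + i) i *
      (∏ k ∈ Finset.range n,
        (sv * qv ^ (-(k : ℤ) - (i : ℤ)) - sv⁻¹ * qv ^ ((k : ℤ) + (i : ℤ)))) := by
  obtain ⟨j, rfl⟩ : ∃ j, i = j + 1 := ⟨i - 1, by omega⟩
  have e1 : ∀ k : ℕ, qv ^ (-(k:ℤ) - ((j+1:ℕ):ℤ)) = qv⁻¹ ^ (k + (j+1)) := by
    intro k
    rw [show -(k:ℤ) - ((j+1:ℕ):ℤ) = -((k + (j+1) : ℕ) : ℤ) by push_cast; ring,
      zpow_neg, zpow_natCast, ← inv_pow]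
  have e2 : ∀ k : ℕ, qv ^ ((k:ℤ) + ((j+1:ℕ):ℤ)) = qv ^ (k + (j+1)) := by
    intro k
    rw [show (k:ℤ) + ((j+1:ℕ):ℤ) = ((k + (j+1) : ℕ) : ℤ) by push_cast; ring, zpow_natCast]
  have e3 : ∀ k : ℕ, qv ^ (-(k:ℤ) - (((j+1:ℕ):ℤ) - 1)) = qv⁻¹ ^ (k + j) := by
    intro k
    rw [show -(k:ℤ) - (((j+1:ℕ):ℤ) - 1) = -((k + j : ℕ) : ℤ) by push_cast; ring,
      zpow_neg, zpow_natCast, ← inv_pow]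
  have e4 : ∀ k : ℕ, qv ^ ((k:ℤ) + ((j+1:ℕ):ℤ) - 1) = qv ^ (k + j) := by
    intro k
    rw [show (k:ℤ) + ((j+1:ℕ):ℤ) - 1 = ((k + j : ℕ) : ℤ) by push_cast; ring, zpow_natCast]
  have e5 : qv ^ (-(n:ℤ)) = qv⁻¹ ^ n := by
    rw [zpow_neg, zpow_natCast, ← inv_pow]
  have e6 : qv ^ ((n:ℤ)) = qv ^ n := zpow_natCast qv n
  have e7 : qv ^ (-2 * ((j+1:ℕ):ℤ)) = qv⁻¹ ^ (2*(j+1)) := by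
    rw [show -2 * ((j+1:ℕ):ℤ) = -((2*(j+1) : ℕ) : ℤ) by push_cast; ring,
      zpow_neg, zpow_natCast, ← inv_pow]
  have e8 : qv ^ (2 * ((j+1:ℕ):ℤ)) = qv ^ (2*(j+1)) := by
    rw [show 2 * ((j+1:ℕ):ℤ) = ((2*(j+1) : ℕ) : ℤ) by push_cast; ring, zpow_natCast]
  simp only [e1, e2, e3, e4, e5, e6, e7, e8]
  rw [Finset.prod_range_succ (fun k => sv * qv⁻¹ ^ (k+(j+1)) - sv⁻¹ * qv ^ (k+(j+1))) n,
      Finset.prod_range_succ' (fun k => sv * qv⁻¹ ^ (k+j) - sv⁻¹ * qv ^ (k+j)) n]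
  have e9 : ∀ k : ℕ, k + 1 + j = k + (j+1) := fun k => by omega
  simp only [e9, Nat.zero_add]
  rw [show n + 1 + (j+1) = (n+(j+1))+1 by omega, show (j+1) - 1 = j by omega]
  apply mul_left_cancel₀ (qint_ne (n+1) (by omega))
  linear_combination
    ((∏ k ∈ Finset.range n, (sv * qv⁻¹ ^ (k + (j+1)) - sv⁻¹ * qv ^ (k + (j+1)))) *
        (sv * qv⁻¹ ^ (n + (j+1)) - sv⁻¹ * qv ^ (n + (j+1)))) * binomC'' n j
    - ((sv * qv⁻¹ ^ j - sv⁻¹ * qv ^ j) *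
        (∏ k ∈ Finset.range n, (sv * qv⁻¹ ^ (k + (j+1)) - sv⁻¹ * qv ^ (k + (j+1))))) * binomB'' n j
    + (qbinom (n+(j+1)) (j+1) *
        (∏ k ∈ Finset.range n, (sv * qv⁻¹ ^ (k + (j+1)) - sv⁻¹ * qv ^ (k + (j+1))))) * key n j
end
end

section
/- Let N ≥ 2, ξ = e^{2πi/(2N)}, λ ∈ ℂ, and let ℛ_ξ be the operator on (ℂ^∞)⊗(ℂ^∞) (with basis v_a ⊗ v_b, a,b ∈ ℕ) defined by ℛ_ξ(v_i ⊗ v_j) = ξ^{−(i+j)λ} Σ_{n=0}^{i} F_{i,j,n}(ξ) ∏_{k=0}^{n−1}(ξ^{λ−k−j} − ξ^{−λ+k+j}) v_{j+n} ⊗ v_{i−n}, where F_{i,j,n}(ξ) = ξ^{2(i−n)(j+n)} ξ^{n(n−1)/2} [n+j choose j]_ξ (interpreting ξ^λ = e^{2πiλ/(2N)}). Then for all 0 ≤ i, j ≤ N−1, ℛ_ξ(v_i ⊗ v_j) lies in the span of {v_a ⊗ v_b : 0 ≤ a, b ≤ N−1}. -/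
noncomputable section

open Complex

/-- The balanced quantum integer `[x]_ξ = (ξ^x - ξ^{-x})/(ξ - ξ^{-1})`. -/
def qintC (ξ : ℂ) (x : ℕ) : ℂ := (ξ ^ x - ξ⁻¹ ^ x) / (ξ - ξ⁻¹)

/-- The quantum binomial `[n+j choose j]_ξ = (∏_{k=1}^n [j+k]_ξ)/[n]_ξ!`. -/
def qbinomC (ξ : ℂ) (n j : ℕ) : ℂ :=
  (∏ k ∈ Finset.Icc 1 n, qintC ξ (j + k)) / (∏ k ∈ Finset.Icc 1 n, qintC ξ k)

/-- The R-matrix coefficient `F_{i,j,n}(ξ) = ξ^{2(i-n)(j+n)} ξ^{n(n-1)/2} [n+j choose j]_ξ`. -/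
def FcoeffC (ξ : ℂ) (i j n : ℕ) : ℂ :=
  ξ ^ (2 * (i - n) * (j + n)) * ξ ^ (n * (n - 1) / 2) * qbinomC ξ n j

/-- `ℛ_ξ(v_i ⊗ v_j)`, as the coefficient function on the basis `v_a ⊗ v_b` of
`(ℂ^∞) ⊗ (ℂ^∞)` (indexed by pairs `(a,b)`), where `xiLam` stands for `ξ^λ`:
`ℛ_ξ(v_i ⊗ v_j) = ξ^{−(i+j)λ} Σ_{n=0}^{i} F_{i,j,n}(ξ)
∏_{k=0}^{n−1}(ξ^{λ−k−j} − ξ^{−λ+k+j}) v_{j+n} ⊗ v_{i−n}`. -/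
def RmatC (ξ xiLam : ℂ) (i j : ℕ) : ℕ × ℕ → ℂ := fun p =>
  ∑ n ∈ Finset.range (i + 1),
    if p = (j + n, i - n) then
      xiLam ^ (-((i : ℤ) + (j : ℤ))) * FcoeffC ξ i j n *
        ∏ k ∈ Finset.range n,
          (xiLam * ξ ^ (-(k : ℤ) - (j : ℤ)) - xiLam⁻¹ * ξ ^ ((k : ℤ) + (j : ℤ)))
    else 0

/-- At a `2N`-th root of unity, `ℛ_ξ` preserves the span of
`{v_a ⊗ v_b : 0 ≤ a, b ≤ N−1}`: every basis vector with a nonzero coefficient in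
`ℛ_ξ(v_i ⊗ v_j)`, for `0 ≤ i, j ≤ N−1`, has both indices at most `N−1`. -/
theorem stmt_7 (N : ℕ) (hN : 2 ≤ N) (lam : ℂ) (ξ xiLam : ℂ)
    (hξ : ξ = Complex.exp (2 * Real.pi * Complex.I / (2 * N)))
    (hxiLam : xiLam = Complex.exp (2 * Real.pi * Complex.I * lam / (2 * N)))
    (i j : ℕ) (hi : i ≤ N - 1) (hj : j ≤ N - 1) :
    ∀ a b : ℕ, RmatC ξ xiLam i j (a, b) ≠ 0 → a ≤ N - 1 ∧ b ≤ N - 1 := by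
  have hNne : (N : ℂ) ≠ 0 := by
    have : 0 < N := by omega
    exact_mod_cast this.ne'
  have hxN : ξ ^ N = -1 := by
    rw [hξ, ← Complex.exp_nat_mul]
    have : (N : ℂ) * (2 * Real.pi * Complex.I / (2 * N)) = Real.pi * Complex.I := by
      field_simp
    rw [this, Complex.exp_pi_mul_I]
  have hqN : qintC ξ N = 0 := by
    unfold qintC
    rw [inv_pow, hxN]
    norm_num
  intro a b h
  obtain ⟨n, hn, hterm⟩ := Finset.exists_ne_zero_of_sum_ne_zero h
  simp only [Finset.mem_range] at hn
  by_cases hab : (a, b) = (j + n, i - n)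
  · obtain ⟨ha, hb⟩ := Prod.mk.injEq .. ▸ hab
    have hFne : FcoeffC ξ i j n ≠ 0 := by
      intro hF
      apply hterm
      rw [if_pos hab, hF]
      ring
    constructor
    · -- a = j + n ≤ N - 1
      by_contra hN1
      have haN : N ≤ a := by omega
      apply hFne
      unfold FcoeffC qbinomC
      have : ∏ k ∈ Finset.Icc 1 n, qintC ξ (j + k) = 0 := by
        apply Finset.prod_eq_zero (i := N - j)
        · simp only [Finset.mem_Icc]; omega
        · have : j + (N - j) = N := by omega
          rw [this, hqN]
      rw [this]
      simp
    · omega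
  · exact absurd (if_neg hab) hterm
end
end
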